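/- If f(p) = D(a_0,...,a_n;p) is an optimal penalty function with a_0 < a_1 < ... < a_n, then the equimax property holds: for each i = 0,...,n-1, the set of absolute maxima M(f) intersects the open interval (a_i, a_{i+1}). -/

import Mathlib

open Finset

noncomputable def penalty (n : ℕ) (a : Fin (n+1) → ℝ) (p : ℝ) : ℝ :=
  ∑ k : Fin (n+1), (n.choose (k:ℕ) : ℝ) * p ^ (k:ℕ) * (1 - p) ^ (n - (k:ℕ)) * |p - a k|

def IsOptimal (n : ℕ) (a : Fin (n+1) → ℝ) : Prop :=
  (∀ k, a k ∈ Set.Icc (0:ℝ) 1) ∧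
  ∀ b : Fin (n+1) → ℝ, (∀ k, b k ∈ Set.Icc (0:ℝ) 1) →
    sSup ((fun p => penalty n a p) '' Set.Icc (0:ℝ) 1) ≤
      sSup ((fun p => penalty n b p) '' Set.Icc (0:ℝ) 1)

/-!
If no absolute maximizer of `f = penalty n a` lies in `(a i, a (i + 1))`, we move the nodes so
as to lower `f` at every maximizer, contradicting optimality. Maximizers avoid the nodes: at an
interior node `f` has a convex kink, and at a node `0` or `1` it vanishes. So near a maximizer `f`
is linear in the nodes, and moving `a` by `ε • d` changes `f q` by
`-ε * ∑ k, sign (q - a k) * B_k(q) * d k` with `B_k` the Bernstein weights. Lowering `a i` and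
raising `a (i + 1)` at suitable rates makes this change negative at every point to the left of
`a i` or to the right of `a (i + 1)`, except at `0` and `1`, where it may vanish; there a
second-order move of `a 0` down and of `a n` up takes over. Compactness of `[0, 1]` turns these
local decreases into a decrease of the maximum.
-/

open Filter Topology Set

theorem not_isLocalMax_add_mul_abs {g β : ℝ → ℝ} {c : ℝ} (hg : DifferentiableAt ℝ g c)
    (hβ : DifferentiableAt ℝ β c) (hβ_nonneg : ∀ᶠ x in 𝓝 c, 0 ≤ β x) (hβc : 0 < β c) :
    ¬ IsLocalMax (fun x => g x + β x * |x - c|) c := by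
  intro hmax
  have minorant (σ : ℝ) (hσ : |σ| ≤ 1) : IsLocalMax (fun x => g x + β x * (σ * (x - c))) c := by
    filter_upwards [hmax, hβ_nonneg] with x hx hβx
    have : σ * (x - c) ≤ |x - c| :=
      (le_abs_self _).trans (by rw [abs_mul]; exact mul_le_of_le_one_left (abs_nonneg _) hσ)
    have := mul_le_mul_of_nonneg_left this hβx
    simp only [sub_self, abs_zero, mul_zero, add_zero] at hx ⊢
    linarith
  have deriv_eq (σ : ℝ) (hσ : |σ| ≤ 1) : deriv g c + β c * σ = 0 := by
    have := hg.hasDerivAt.add (hβ.hasDerivAt.mul (((hasDerivAt_id c).sub_const c).const_mul σ))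
    simpa using (minorant σ hσ).hasDerivAt_eq_zero this
  have h₁ := deriv_eq 1 (by simp)
  have h₂ := deriv_eq (-1) (by simp)
  linarith

theorem eventually_abs_eq_sign_mul {x : ℝ} (hx : x ≠ 0) : ∀ᶠ y in 𝓝 x, |y| = Real.sign x * y := by
  rcases hx.lt_or_gt with hx | hx
  · filter_upwards [gt_mem_nhds hx] with y hy
    rw [abs_of_neg hy, Real.sign_of_neg hx, neg_one_mul]
  · filter_upwards [lt_mem_nhds hx] with y hy
    rw [abs_of_pos hy, Real.sign_of_pos hx, one_mul]

theorem IsCompact.eventually_forall_lt {β : Type*} [TopologicalSpace β] {K : Set β}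
    (hK : IsCompact K) {F : ℝ × β → ℝ} (hF : Continuous F) {M : ℝ} (hM : ∀ q ∈ K, F (0, q) ≤ M)
    (hdesc : ∀ p ∈ K, F (0, p) = M → ∀ᶠ z in 𝓝 (0, p), 0 < z.1 → z.2 ∈ K → F z < M) :
    ∀ᶠ ε in 𝓝 (0 : ℝ), 0 < ε → ∀ q ∈ K, F (ε, q) < M := by
  refine (hK.eventually_forall_of_forall_eventually (P := fun ε q => 0 < ε → q ∈ K → F (ε, q) < M)
    fun p hp => ?_).mono fun ε h hε q hq => h q hq hε hq
  rcases (hM p hp).lt_or_eq with hlt | heq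
  · exact ((hF.tendsto (0, p)).eventually (gt_mem_nhds hlt)).mono fun z hz _ _ => hz
  · exact hdesc p hp heq

theorem eventually_pos_add_mul {g h : ℝ → ℝ} {p : ℝ} {K : Set ℝ} (hg : Continuous g)
    (hh : Continuous h) (H : 0 < g p ∨ (∀ᶠ q in 𝓝 p, q ∈ K → 0 ≤ g q) ∧ 0 < h p) :
    ∀ᶠ z : ℝ × ℝ in 𝓝 (0, p), 0 < z.1 → z.2 ∈ K → 0 < g z.2 + z.1 * h z.2 := by
  rcases H with hgp | ⟨hg_nonneg, hhp⟩
  · have : Continuous fun z : ℝ × ℝ => g z.2 + z.1 * h z.2 := by fun_prop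
    exact ((this.tendsto (0, p)).eventually (lt_mem_nhds (by simpa using hgp))).mono
      fun z hz _ _ => hz
  · filter_upwards [(continuous_snd.tendsto ((0 : ℝ), p)).eventually
      (hg_nonneg.and ((hh.tendsto p).eventually (lt_mem_nhds hhp)))] with z hz hz₁ hz₂
    exact add_pos_of_nonneg_of_pos (hz.1 hz₂) (mul_pos hz₁ hz.2)

noncomputable def bernsteinWeight (n k : ℕ) (p : ℝ) : ℝ :=
  n.choose k * p ^ k * (1 - p) ^ (n - k)

section Bernstein

variable {n k : ℕ} {p : ℝ}

theorem bernsteinWeight_nonneg (hp : p ∈ Icc (0 : ℝ) 1) : 0 ≤ bernsteinWeight n k p := by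
  have : 0 ≤ 1 - p := sub_nonneg.2 hp.2
  unfold bernsteinWeight
  have := hp.1
  positivity

theorem bernsteinWeight_pos (hk : k ≤ n) (hp : p ∈ Ioo (0 : ℝ) 1) : 0 < bernsteinWeight n k p := by
  have : 0 < 1 - p := sub_pos.2 hp.2
  have : (0 : ℝ) < n.choose k := mod_cast Nat.choose_pos hk
  unfold bernsteinWeight
  have := hp.1
  positivity

theorem differentiable_bernsteinWeight (n k : ℕ) : Differentiable ℝ (bernsteinWeight n k) := by
  unfold bernsteinWeight; fun_prop

theorem bernsteinWeight_zero_left (n : ℕ) (p : ℝ) : bernsteinWeight n 0 p = (1 - p) ^ n := by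
  simp [bernsteinWeight]

theorem bernsteinWeight_self (n : ℕ) (p : ℝ) : bernsteinWeight n n p = p ^ n := by
  simp [bernsteinWeight]

theorem bernsteinWeight_at_zero (hk : k ≠ 0) : bernsteinWeight n k 0 = 0 := by
  simp [bernsteinWeight, hk]

theorem bernsteinWeight_at_one (hk : k < n) : bernsteinWeight n k 1 = 0 := by
  simp [bernsteinWeight, (Nat.sub_pos_of_lt hk).ne']

theorem succ_mul_one_sub_mul_bernsteinWeight_succ (hk : k < n) (p : ℝ) :
    (k + 1) * (1 - p) * bernsteinWeight n (k + 1) p = (n - k) * p * bernsteinWeight n k p := by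
  have hchoose := congrArg (Nat.cast : ℕ → ℝ) (Nat.choose_succ_right_eq n k)
  push_cast [Nat.cast_sub hk.le] at hchoose
  have hexp : n - k = n - (k + 1) + 1 := by omega
  unfold bernsteinWeight
  rw [hexp, pow_succ, pow_succ]
  linear_combination (p ^ k * p * (1 - p) * (1 - p) ^ (n - (k + 1))) * hchoose

end Bernstein

section Gap

variable {n I : ℕ} {X Y q : ℝ}

noncomputable def gapRate (n I : ℕ) (X Y q : ℝ) : ℝ :=
  (n - I) * X * bernsteinWeight n I q - (I + 1) * (1 - Y) * bernsteinWeight n (I + 1) q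

theorem one_sub_mul_gapRate (hI : I < n) (X Y q : ℝ) :
    (1 - q) * gapRate n I X Y q = (n - I) * bernsteinWeight n I q * (X - q + q * (Y - X)) := by
  unfold gapRate
  linear_combination (-(1 - Y)) * succ_mul_one_sub_mul_bernsteinWeight_succ hI q

theorem mul_neg_gapRate (hI : I < n) (X Y q : ℝ) :
    q * -gapRate n I X Y q =
      (I + 1) * bernsteinWeight n (I + 1) q * (q - Y + (1 - q) * (Y - X)) := by
  unfold gapRate
  linear_combination X * succ_mul_one_sub_mul_bernsteinWeight_succ hI q

theorem gapRate_nonneg (hI : I < n) (hXY : X < Y) (hY : Y ≤ 1) (hq : 0 ≤ q) (hqX : q < X) :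
    0 ≤ gapRate n I X Y q := by
  refine (mul_nonneg_iff_of_pos_left (by linarith : 0 < 1 - q)).1 ?_
  rw [one_sub_mul_gapRate hI]
  have : (0 : ℝ) ≤ n - I := sub_nonneg.2 (mod_cast hI.le)
  have := bernsteinWeight_nonneg (n := n) (k := I) ⟨hq, by linarith⟩
  have : 0 ≤ X - q + q * (Y - X) := by nlinarith
  positivity

theorem gapRate_pos (hI : I < n) (hXY : X < Y) (hY : Y ≤ 1) (hq : 0 < q) (hqX : q < X) :
    0 < gapRate n I X Y q := by
  refine (mul_pos_iff_of_pos_left (by linarith : 0 < 1 - q)).1 ?_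
  rw [one_sub_mul_gapRate hI]
  have : (0 : ℝ) < n - I := sub_pos.2 (mod_cast hI)
  have := bernsteinWeight_pos (n := n) (k := I) hI.le ⟨hq, by linarith⟩
  have : 0 < X - q + q * (Y - X) := by nlinarith
  positivity

theorem neg_gapRate_nonneg (hI : I < n) (hX : 0 ≤ X) (hXY : X < Y) (hYq : Y < q) (hq : q ≤ 1) :
    0 ≤ -gapRate n I X Y q := by
  refine (mul_nonneg_iff_of_pos_left (by linarith : 0 < q)).1 ?_
  rw [mul_neg_gapRate hI]
  have := bernsteinWeight_nonneg (n := n) (k := I + 1) ⟨by linarith, hq⟩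
  have : 0 ≤ q - Y + (1 - q) * (Y - X) := by nlinarith
  positivity

theorem neg_gapRate_pos (hI : I < n) (hX : 0 ≤ X) (hXY : X < Y) (hYq : Y < q) (hq : q < 1) :
    0 < -gapRate n I X Y q := by
  refine (mul_pos_iff_of_pos_left (by linarith : 0 < q)).1 ?_
  rw [mul_neg_gapRate hI]
  have := bernsteinWeight_pos (n := n) (k := I + 1) hI ⟨by linarith, hq⟩
  have : 0 < q - Y + (1 - q) * (Y - X) := by nlinarith
  positivity

end Gap

noncomputable def maxPenalty (n : ℕ) (a : Fin (n+1) → ℝ) : ℝ :=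
  sSup (penalty n a '' Icc 0 1)

noncomputable def descentRate (n : ℕ) (s d : Fin (n+1) → ℝ) (q : ℝ) : ℝ :=
  ∑ k, s k * bernsteinWeight n k q * d k

section Penalty

variable {n : ℕ} {a : Fin (n+1) → ℝ}

theorem penalty_eq_sum (n : ℕ) (a : Fin (n+1) → ℝ) (p : ℝ) :
    penalty n a p = ∑ k : Fin (n+1), bernsteinWeight n k p * |p - a k| := rfl

theorem continuous_penalty (n : ℕ) (a : Fin (n+1) → ℝ) : Continuous (penalty n a) := by
  unfold penalty; fun_prop

theorem continuous_descentRate (n : ℕ) (s d : Fin (n+1) → ℝ) :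
    Continuous (descentRate n s d) := by
  unfold descentRate bernsteinWeight; fun_prop

theorem penalty_zero (n : ℕ) (a : Fin (n+1) → ℝ) : penalty n a 0 = |a 0| := by
  rw [penalty_eq_sum, Fintype.sum_eq_single 0 fun k hk => by
    rw [bernsteinWeight_at_zero (Fin.val_ne_iff.2 hk), zero_mul]]
  simp [bernsteinWeight_zero_left]

theorem penalty_one (n : ℕ) (a : Fin (n+1) → ℝ) : penalty n a 1 = |1 - a (Fin.last n)| := by
  rw [penalty_eq_sum, Fintype.sum_eq_single (Fin.last n) fun k hk => by
    rw [bernsteinWeight_at_one (Fin.val_lt_last hk), zero_mul]]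
  simp [bernsteinWeight_self]

theorem penalty_pos {p : ℝ} (hp : p ∈ Ioo (0 : ℝ) 1) {k : Fin (n+1)} (hk : p ≠ a k) :
    0 < penalty n a p :=
  Finset.sum_pos' (fun _ _ => mul_nonneg (bernsteinWeight_nonneg (Ioo_subset_Icc_self hp))
    (abs_nonneg _)) ⟨k, mem_univ k, mul_pos (bernsteinWeight_pos (Nat.lt_succ_iff.1 k.2) hp)
    (abs_pos.2 (sub_ne_zero.2 hk))⟩

theorem penalty_le_maxPenalty {p : ℝ} (hp : p ∈ Icc (0 : ℝ) 1) : penalty n a p ≤ maxPenalty n a :=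
  le_csSup (isCompact_Icc.bddAbove_image (continuous_penalty n a).continuousOn)
    (mem_image_of_mem _ hp)

theorem maxPenalty_lt_iff {M : ℝ} : maxPenalty n a < M ↔ ∀ q ∈ Icc (0 : ℝ) 1, penalty n a q < M :=
  isCompact_Icc.sSup_lt_iff_of_continuous (nonempty_Icc.2 zero_le_one)
    (continuous_penalty n a).continuousOn M

theorem maxPenalty_pos (hn : 0 < n) (hmono : StrictMono a) : 0 < maxPenalty n a := by
  have : NeZero n := ⟨hn.ne'⟩
  have hp : (1 / 2 : ℝ) ∈ Ioo (0 : ℝ) 1 := by norm_num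
  have hends : a 0 ≠ a (Fin.last n) := (hmono Fin.last_pos').ne
  refine lt_of_lt_of_le ?_ (penalty_le_maxPenalty (Ioo_subset_Icc_self hp))
  by_cases h : (1 / 2 : ℝ) = a 0
  · exact penalty_pos hp (k := Fin.last n) (h ▸ hends)
  · exact penalty_pos hp h

theorem not_isLocalMax_penalty (hinj : Function.Injective a) {k : Fin (n+1)}
    (hk : a k ∈ Ioo (0 : ℝ) 1) : ¬ IsLocalMax (penalty n a) (a k) := by
  classical
  have hsplit : penalty n a = fun x =>
      (∑ j ∈ univ.erase k, bernsteinWeight n j x * |x - a j|) + bernsteinWeight n k x * |x - a k| :=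
    funext fun x => (sum_erase_add _ _ (mem_univ k)).symm
  rw [hsplit]
  refine not_isLocalMax_add_mul_abs ?_ (differentiable_bernsteinWeight n k _) ?_
    (bernsteinWeight_pos (Nat.lt_succ_iff.1 k.2) hk)
  · refine DifferentiableAt.fun_sum fun j hj => ?_
    have hne : a k - a j ≠ 0 := sub_ne_zero.2 (hinj.ne (ne_of_mem_erase hj).symm)
    exact (differentiable_bernsteinWeight n j _).mul
      ((differentiableAt_id.sub_const _).abs hne)
  · filter_upwards [Icc_mem_nhds hk.1 hk.2] with x hx using bernsteinWeight_nonneg hx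

theorem penalty_node_lt_maxPenalty (hn : 0 < n) (ha : ∀ k, a k ∈ Icc (0 : ℝ) 1)
    (hmono : StrictMono a) (k : Fin (n+1)) : penalty n a (a k) < maxPenalty n a := by
  have hM := maxPenalty_pos hn hmono
  rcases (ha k).1.eq_or_lt with hk₀ | hk₀
  · have : a 0 = 0 := le_antisymm (hk₀ ▸ hmono.monotone (Fin.zero_le k)) (ha 0).1
    rwa [← hk₀, penalty_zero, this, abs_zero]
  rcases (ha k).2.eq_or_lt with hk₁ | hk₁
  · have : a (Fin.last n) = 1 := le_antisymm (ha _).2 (hk₁ ▸ hmono.monotone (Fin.le_last k))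
    rwa [hk₁, penalty_one, this, sub_self, abs_zero]
  refine (penalty_le_maxPenalty (Ioo_subset_Icc_self ⟨hk₀, hk₁⟩)).lt_of_ne fun heq => ?_
  refine not_isLocalMax_penalty hmono.injective ⟨hk₀, hk₁⟩ ?_
  filter_upwards [Icc_mem_nhds hk₀ hk₁] with x hx
  exact heq ▸ penalty_le_maxPenalty hx

theorem eventually_penalty_eq {p : ℝ} (hp : ∀ k, p ≠ a k) :
    ∀ᶠ z : (Fin (n+1) → ℝ) × ℝ in 𝓝 (a, p),
      penalty n z.1 z.2 = ∑ k, Real.sign (p - a k) * bernsteinWeight n k z.2 * (z.2 - z.1 k) := by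
  have hk (k : Fin (n+1)) : ∀ᶠ z : (Fin (n+1) → ℝ) × ℝ in 𝓝 (a, p),
      |z.2 - z.1 k| = Real.sign (p - a k) * (z.2 - z.1 k) :=
    ((continuous_snd.sub ((continuous_apply k).comp continuous_fst)).tendsto (a, p)).eventually
      (eventually_abs_eq_sign_mul (sub_ne_zero.2 (hp k)))
  filter_upwards [eventually_all.2 hk] with z hz
  rw [penalty_eq_sum]
  exact sum_congr rfl fun k _ => by rw [hz k]; ring

theorem eventually_penalty_curve_eq {p : ℝ} (hp : ∀ k, p ≠ a k) (d e : Fin (n+1) → ℝ) :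
    ∀ᶠ z : ℝ × ℝ in 𝓝 (0, p), penalty n (a + z.1 • d + z.1 ^ 2 • e) z.2 =
      penalty n a z.2 - z.1 * (descentRate n (fun k => Real.sign (p - a k)) d z.2 +
        z.1 * descentRate n (fun k => Real.sign (p - a k)) e z.2) := by
  have hcurve :
      Tendsto (fun z : ℝ × ℝ => (a + z.1 • d + z.1 ^ 2 • e, z.2)) (𝓝 (0, p)) (𝓝 (a, p)) := by
    have : Continuous fun z : ℝ × ℝ => (a + z.1 • d + z.1 ^ 2 • e, z.2) := by fun_prop
    simpa using this.tendsto (0, p)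
  have hconst : Tendsto (fun z : ℝ × ℝ => (a, z.2)) (𝓝 (0, p)) (𝓝 (a, p)) :=
    tendsto_const_nhds.prodMk_nhds (continuous_snd.tendsto _)
  filter_upwards [hcurve.eventually (eventually_penalty_eq hp),
    hconst.eventually (eventually_penalty_eq hp)] with z hz hz₀
  rw [hz, hz₀]
  simp only [descentRate, Pi.add_apply, Pi.smul_apply, smul_eq_mul, mul_sum, ← sum_add_distrib,
    ← sum_sub_distrib]
  exact sum_congr rfl fun k _ => by ring

theorem exists_maxPenalty_lt (d e : Fin (n+1) → ℝ)
    (hadm : ∀ᶠ ε in 𝓝[>] (0 : ℝ), ∀ k, (a + ε • d + ε ^ 2 • e) k ∈ Icc (0 : ℝ) 1)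
    (hdesc : ∀ p ∈ Icc (0 : ℝ) 1, penalty n a p = maxPenalty n a → (∀ k, p ≠ a k) ∧
      ∀ᶠ z : ℝ × ℝ in 𝓝 (0, p), 0 < z.1 → z.2 ∈ Icc (0 : ℝ) 1 →
        0 < descentRate n (fun k => Real.sign (p - a k)) d z.2 +
          z.1 * descentRate n (fun k => Real.sign (p - a k)) e z.2) :
    ∃ b : Fin (n+1) → ℝ, (∀ k, b k ∈ Icc (0 : ℝ) 1) ∧ maxPenalty n b < maxPenalty n a := by
  have hF : Continuous fun z : ℝ × ℝ => penalty n (a + z.1 • d + z.1 ^ 2 • e) z.2 := by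
    unfold penalty; fun_prop
  have hlt := isCompact_Icc.eventually_forall_lt hF (M := maxPenalty n a)
    (by simpa using fun q hq => penalty_le_maxPenalty hq) fun p hp hpM => by
      obtain ⟨hnode, hpos⟩ := hdesc p hp (by simpa using hpM)
      filter_upwards [eventually_penalty_curve_eq hnode d e, hpos] with z hz hpos hz₁ hz₂
      rw [hz]
      nlinarith [penalty_le_maxPenalty (a := a) hz₂, mul_pos hz₁ (hpos hz₁ hz₂)]
  obtain ⟨ε, hε, hb, hε₀⟩ :=
    ((hlt.filter_mono nhdsWithin_le_nhds).and (hadm.and self_mem_nhdsWithin)).exists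
  exact ⟨_, hb, maxPenalty_lt_iff.2 (hε hε₀)⟩

end Penalty

section TowardEnds

variable {n : ℕ}

/-- Scaling each move by the distance to the end it heads for keeps small steps inside `[0, 1]`. -/
def towardEnds (a α β : Fin (n+1) → ℝ) : Fin (n+1) → ℝ :=
  fun k => β k * (1 - a k) - α k * a k

theorem eventually_add_towardEnds_mem_Icc {a α β α' β' : Fin (n+1) → ℝ}
    (ha : ∀ k, a k ∈ Icc (0 : ℝ) 1) (hα : 0 ≤ α) (hβ : 0 ≤ β) (hα' : 0 ≤ α') (hβ' : 0 ≤ β') :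
    ∀ᶠ ε in 𝓝[>] (0 : ℝ), ∀ k,
      (a + ε • towardEnds a α β + ε ^ 2 • towardEnds a α' β') k ∈ Icc (0 : ℝ) 1 := by
  refine eventually_all.2 fun k => ?_
  have hsmall (u v : ℝ) : ∀ᶠ ε in 𝓝[>] (0 : ℝ), ε * u + ε ^ 2 * v < 1 := by
    have : Continuous fun ε : ℝ => ε * u + ε ^ 2 * v := by fun_prop
    exact ((this.tendsto 0).eventually (gt_mem_nhds (by simp))).filter_mono nhdsWithin_le_nhds
  filter_upwards [self_mem_nhdsWithin, hsmall (α k) (α' k), hsmall (β k) (β' k)] with ε hε hA hB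
  obtain ⟨hx₀, hx₁⟩ := ha k
  have : 0 < ε := hε
  have : (0 : ℝ) ≤ α k := hα k
  have : (0 : ℝ) ≤ α' k := hα' k
  have : (0 : ℝ) ≤ β k := hβ k
  have : (0 : ℝ) ≤ β' k := hβ' k
  have hA₀ : 0 ≤ ε * α k + ε ^ 2 * α' k := by positivity
  have hB₀ : 0 ≤ ε * β k + ε ^ 2 * β' k := by positivity
  have hval : (a + ε • towardEnds a α β + ε ^ 2 • towardEnds a α' β') k =
      a k + (ε * β k + ε ^ 2 * β' k) * (1 - a k) - (ε * α k + ε ^ 2 * α' k) * a k := by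
    simp only [Pi.add_apply, Pi.smul_apply, smul_eq_mul, towardEnds]
    ring
  rw [hval]
  constructor
  · nlinarith [mul_nonneg hx₀ (sub_nonneg.2 hA.le), mul_nonneg hB₀ (sub_nonneg.2 hx₁)]
  · nlinarith [mul_nonneg hA₀ hx₀, mul_nonneg (sub_nonneg.2 hx₁) (sub_nonneg.2 hB.le)]

theorem descentRate_towardEnds_single (s a : Fin (n+1) → ℝ) (j j' : Fin (n+1)) (c c' q : ℝ) :
    descentRate n s (towardEnds a (Pi.single j c) (Pi.single j' c')) q =
      s j' * bernsteinWeight n j' q * c' * (1 - a j') - s j * bernsteinWeight n j q * c * a j := by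
  simp [descentRate, towardEnds, Pi.single_apply, mul_sub, sum_sub_distrib]
  ring

end TowardEnds

section Equimax

variable {n : ℕ} {a : Fin (n+1) → ℝ}

/-- The ratio `(n - i) * a i / ((i + 1) * (1 - a (i + 1)))` of the two rates lies between the
values of `bernsteinWeight n (i + 1) q / bernsteinWeight n i q = (n - i) * q / ((i + 1) * (1 - q))`
at `q = a i` and at `q = a (i + 1)`, so this move lowers `penalty` to first order at every point
of `(0, 1)` outside `[a i, a (i + 1)]`. -/
noncomputable def gapDir (a : Fin (n+1) → ℝ) (i : Fin n) : Fin (n+1) → ℝ :=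
  towardEnds a (Pi.single i.castSucc ((n : ℝ) - i)) (Pi.single i.succ ((i : ℝ) + 1))

def endDir (a : Fin (n+1) → ℝ) : Fin (n+1) → ℝ :=
  towardEnds a (Pi.single 0 1) (Pi.single (Fin.last n) 1)

theorem descentRate_gapDir_of_lt {i : Fin n} {p : ℝ} (hpX : p < a i.castSucc)
    (hXY : a i.castSucc < a i.succ) :
    descentRate n (fun k => Real.sign (p - a k)) (gapDir a i) =
      gapRate n i (a i.castSucc) (a i.succ) := by
  ext q
  rw [gapDir, descentRate_towardEnds_single, Real.sign_of_neg (by linarith),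
    Real.sign_of_neg (by linarith), gapRate]
  simp only [Fin.val_castSucc, Fin.val_succ]
  ring

theorem descentRate_gapDir_of_gt {i : Fin n} {p : ℝ} (hpY : a i.succ < p)
    (hXY : a i.castSucc < a i.succ) :
    descentRate n (fun k => Real.sign (p - a k)) (gapDir a i) =
      -gapRate n i (a i.castSucc) (a i.succ) := by
  ext q
  rw [gapDir, descentRate_towardEnds_single, Real.sign_of_pos (by linarith),
    Real.sign_of_pos (by linarith), Pi.neg_apply, gapRate]
  simp only [Fin.val_castSucc, Fin.val_succ]
  ring

theorem descentRate_endDir_zero (hn : 0 < n) (ha₀ : 0 < a 0) :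
    descentRate n (fun k => Real.sign (0 - a k)) (endDir a) 0 = a 0 := by
  rw [endDir, descentRate_towardEnds_single,
    bernsteinWeight_at_zero (k := (Fin.last n : ℕ)) (by simpa using hn.ne'),
    Real.sign_of_neg (by linarith : 0 - a 0 < 0)]
  simp [bernsteinWeight_zero_left]

theorem descentRate_endDir_one (hn : 0 < n) (haN : a (Fin.last n) < 1) :
    descentRate n (fun k => Real.sign (1 - a k)) (endDir a) 1 = 1 - a (Fin.last n) := by
  rw [endDir, descentRate_towardEnds_single,
    bernsteinWeight_at_one (k := ((0 : Fin (n+1)) : ℕ)) (by simpa using hn),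
    Real.sign_of_pos (by linarith : 0 < 1 - a (Fin.last n))]
  simp [bernsteinWeight_self]

theorem exists_maxPenalty_lt_of_gap (hn : 0 < n) (ha : ∀ k, a k ∈ Icc (0 : ℝ) 1)
    (hmono : StrictMono a) (i : Fin n)
    (hgap : ∀ x, a i.castSucc < x → x < a i.succ → penalty n a x ≠ maxPenalty n a) :
    ∃ b : Fin (n+1) → ℝ, (∀ k, b k ∈ Icc (0 : ℝ) 1) ∧ maxPenalty n b < maxPenalty n a := by
  have hXY : a i.castSucc < a i.succ := hmono Fin.castSucc_lt_succ
  have hI : (i : ℕ) < n := i.2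
  have hadm := eventually_add_towardEnds_mem_Icc ha
    (α := Pi.single i.castSucc ((n : ℝ) - i)) (β := Pi.single i.succ ((i : ℝ) + 1))
    (α' := Pi.single 0 1) (β' := Pi.single (Fin.last n) 1)
    (Pi.single_nonneg.2 (sub_nonneg.2 (Nat.cast_le.2 hI.le))) (Pi.single_nonneg.2 (by positivity))
    (Pi.single_nonneg.2 zero_le_one) (Pi.single_nonneg.2 zero_le_one)
  refine exists_maxPenalty_lt (gapDir a i) (endDir a) hadm fun p hp hpM => ?_
  have hnode (k : Fin (n+1)) : p ≠ a k := fun h =>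
    (penalty_node_lt_maxPenalty hn ha hmono k).ne (h ▸ hpM)
  refine ⟨hnode, eventually_pos_add_mul (continuous_descentRate _ _ _)
    (continuous_descentRate _ _ _) ?_⟩
  rcases (hnode i.castSucc).lt_or_gt with hpX | hpX
  · rw [descentRate_gapDir_of_lt hpX hXY]
    rcases hp.1.eq_or_lt with rfl | hp₀
    · refine .inr ⟨?_, ?_⟩
      · filter_upwards [gt_mem_nhds hpX] with q hqX hq
        exact gapRate_nonneg hI hXY (ha _).2 hq.1 hqX
      · have ha₀ := (ha 0).1.lt_of_ne (hnode 0)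
        rwa [descentRate_endDir_zero hn ha₀]
    · exact .inl (gapRate_pos hI hXY (ha _).2 hp₀ hpX)
  · have hpY : a i.succ < p :=
      (not_lt.1 fun h => hgap p hpX h hpM).lt_of_ne (hnode i.succ).symm
    rw [descentRate_gapDir_of_gt hpY hXY]
    rcases hp.2.eq_or_lt with rfl | hp₁
    · refine .inr ⟨?_, ?_⟩
      · filter_upwards [lt_mem_nhds hpY] with q hYq hq
        exact neg_gapRate_nonneg hI (ha _).1 hXY hYq hq.2
      · have haN := (ha (Fin.last n)).2.lt_of_ne (hnode (Fin.last n)).symm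
        rw [descentRate_endDir_one hn haN]
        linarith
    · exact .inl (neg_gapRate_pos hI (ha _).1 hXY hpY hp₁)

end Equimax

theorem stmt_7 (n : ℕ) (hn : 0 < n) (a : Fin (n+1) → ℝ) (ha : IsOptimal n a)
    (hmono : StrictMono a) :
    ∀ i : Fin n, ∃ x, a i.castSucc < x ∧ x < a i.succ ∧
      penalty n a x = sSup ((fun p => penalty n a p) '' Set.Icc (0:ℝ) 1) := by
  intro i
  by_contra! hgap
  obtain ⟨b, hb, hlt⟩ := exists_maxPenalty_lt_of_gap hn ha.1 hmono i hgap
  exact (ha.2 b hb).not_gt hlt
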